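/- arXiv:1308.5994 — 9 statements merged into one kernel-verified Lean document; each statement's English description precedes it below -/
import Mathlib

section
/- Let A ⊆ B ⊆ C be a chain of Frobenius extensions, with dual bases (x_α),(y_α) of B over A for the A-linear trace ∂^B_A, and dual bases (p_β),(q_β) of C over B for the B-linear trace ∂^C_B. Then the composite trace ∂^C_A := ∂^B_A ∘ ∂^C_B : C → A is A-linear and the families (ι^C_B(x_α)·p_β)_{(α,β)} and (ι^C_B(y_α)·q_β)_{(α,β)} are dual bases of C over A for ∂^C_A; that is, ∂^B_A(∂^C_B(ι^C_B(x_α)·p_β · ι^C_B(y_γ)·q_δ)) = δ_{αγ}δ_{βδ}, and each of these two families generates C as an A-module. -/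
open Pointwise

lemma chain_span_aux
    {A B C : Type*} [CommRing A] [CommRing B] [CommRing C]
    [Algebra A B] [Algebra B C] [Algebra A C] [IsScalarTower A B C]
    {IB IC : Type*} (x : IB → B) (p : IC → C)
    (hx : Submodule.span A (Set.range x) = ⊤)
    (hp : Submodule.span B (Set.range p) = ⊤) :
    Submodule.span A (Set.range fun ab : IB × IC => algebraMap B C (x ab.1) * p ab.2) = ⊤ := by
  have hset : (Set.range x : Set B) • (Set.range p : Set C)
      = Set.range fun ab : IB × IC => algebraMap B C (x ab.1) * p ab.2 := by
    ext c
    constructor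
    · rintro ⟨b, ⟨α, rfl⟩, d, ⟨β, rfl⟩, rfl⟩
      exact ⟨(α, β), (Algebra.smul_def _ _).symm⟩
    · rintro ⟨⟨α, β⟩, rfl⟩
      exact ⟨x α, ⟨α, rfl⟩, p β, ⟨β, rfl⟩, Algebra.smul_def _ _⟩
  rw [← hset, Submodule.span_smul_of_span_eq_top hx, hp]
  rfl

/-- For a chain of Frobenius extensions `A ⊆ B ⊆ C`, the composite trace
`∂^B_A ∘ ∂^C_B` is `A`-linear and the products of dual bases form dual bases
of `C` over `A` for the composite trace. -/
theorem chain_composite_dual_bases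
    (A B C : Type*) [CommRing A] [CommRing B] [CommRing C]
    [Algebra A B] [Algebra B C] [Algebra A C] [IsScalarTower A B C]
    (trBA : B →ₗ[A] A) (trCB : C →ₗ[B] B)
    (IB IC : Type*) [Fintype IB] [Fintype IC] [DecidableEq IB] [DecidableEq IC]
    (x y : IB → B) (p q : IC → C)
    (hxy : ∀ α β, trBA (x α * y β) = if α = β then 1 else 0)
    (hx : Submodule.span A (Set.range x) = ⊤)
    (hy : Submodule.span A (Set.range y) = ⊤)
    (hpq : ∀ α β, trCB (p α * q β) = if α = β then 1 else 0)
    (hp : Submodule.span B (Set.range p) = ⊤)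
    (hq : Submodule.span B (Set.range q) = ⊤) :
    IsLinearMap A (fun c : C => trBA (trCB c)) ∧
    (∀ (α γ : IB) (β δ : IC),
      trBA (trCB ((algebraMap B C (x α) * p β) * (algebraMap B C (y γ) * q δ))) =
        if α = γ ∧ β = δ then 1 else 0) ∧
    Submodule.span A (Set.range fun ab : IB × IC => algebraMap B C (x ab.1) * p ab.2) = ⊤ ∧
    Submodule.span A (Set.range fun ab : IB × IC => algebraMap B C (y ab.1) * q ab.2) = ⊤ := by
  refine ⟨⟨fun c d => by simp, fun a c => ?_⟩, fun α γ β δ => ?_, chain_span_aux x p hx hp,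
    chain_span_aux y q hy hq⟩
  · have : a • c = algebraMap A B a • c := by
      rw [algebraMap_smul]
    rw [this, map_smul, algebraMap_smul, map_smul]
  · have key : (algebraMap B C (x α) * p β) * (algebraMap B C (y γ) * q δ)
        = (x α * y γ) • (p β * q δ) := by
      rw [Algebra.smul_def, map_mul]; ring
    rw [key, map_smul, smul_eq_mul, hpq]
    by_cases h1 : β = δ <;> simp [h1, hxy α γ]
end

section
/- Let A ⊆ B ⊆ C be a chain of Frobenius extensions with dual bases (x_α),(y_α) of B over A and (p_β),(q_β) of C over B. Then in C ⊗_A B one has Σ_{α,β} (ι^C_B(x_α)·p_β) ⊗ ∂^C_B(ι^C_B(y_α)·q_β) = Σ_α ι^C_B(x_α) ⊗ y_α. -/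
open TensorProduct

theorem dual_expand {A B : Type*} [CommRing A] [CommRing B] [Algebra A B]
    (tr : B →ₗ[A] A) {I : Type*} [Fintype I] [DecidableEq I]
    (x y : I → B) (hxy : ∀ α β, tr (x α * y β) = if α = β then 1 else 0)
    (hx : Submodule.span A (Set.range x) = ⊤) (b : B) :
    ∑ α, tr (b * y α) • x α = b := by
  have h : (∑ α, LinearMap.smulRight (tr ∘ₗ LinearMap.mulRight A (y α)) (x α))
      = LinearMap.id (R := A) (M := B) := by
    apply LinearMap.ext_on hx
    rintro _ ⟨δ, rfl⟩
    simp [hxy, Finset.sum_ite_eq']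
  simpa using LinearMap.congr_fun h b

/-- For a chain of Frobenius extensions, the sum over (a,b) of (iota(x a) * p b) tensor trCB(iota(y a) * q b) equals the sum over a of iota(x a) tensor (y a), in C tensor_A B. -/
theorem chain_coproduct_partial_trace
    (A B C : Type*) [CommRing A] [CommRing B] [CommRing C]
    [Algebra A B] [Algebra B C] [Algebra A C] [IsScalarTower A B C]
    (trBA : B →ₗ[A] A) (trCB : C →ₗ[B] B)
    (IB IC : Type*) [Fintype IB] [Fintype IC] [DecidableEq IB] [DecidableEq IC]
    (x y : IB → B) (p q : IC → C)
    (hxy : ∀ α β, trBA (x α * y β) = if α = β then 1 else 0)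
    (hx : Submodule.span A (Set.range x) = ⊤)
    (hy : Submodule.span A (Set.range y) = ⊤)
    (hpq : ∀ α β, trCB (p α * q β) = if α = β then 1 else 0)
    (hp : Submodule.span B (Set.range p) = ⊤)
    (hq : Submodule.span B (Set.range q) = ⊤) :
    ∑ α, ∑ β, (algebraMap B C (x α) * p β) ⊗ₜ[A] trCB (algebraMap B C (y α) * q β) =
      ∑ α, (algebraMap B C (x α)) ⊗ₜ[A] y α := by
  have hL1 : ∀ b : B, ∑ α, trBA (b * y α) • x α = b := dual_expand trBA x y hxy hx
  have hxy' : ∀ α β, trBA (y α * x β) = if α = β then 1 else 0 := by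
    intro α β; rw [mul_comm, hxy]; simp [eq_comm]
  have hL2 : ∀ b : B, ∑ γ, trBA (b * x γ) • y γ = b := dual_expand trBA y x hxy' hy
  have hL3 : ∑ β, trCB (q β) • p β = 1 := by
    simpa using dual_expand trCB p q hpq hp 1
  have fL : B →ₗ[A] C := (IsScalarTower.toAlgHom A B C).toLinearMap
  have step1 : ∀ α β, trCB (algebraMap B C (y α) * q β) = y α * trCB (q β) := by
    intro α β
    rw [← Algebra.smul_def, map_smul, smul_eq_mul]
  have step2 : ∀ α β, (algebraMap B C (x α) * p β) ⊗ₜ[A] (y α * trCB (q β))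
      = ∑ γ, (trBA ((x γ * trCB (q β)) * y α) • (algebraMap B C (x α) * p β)) ⊗ₜ[A] y γ := by
    intro α β
    conv_lhs => rw [show y α * trCB (q β)
      = ∑ γ, trBA ((y α * trCB (q β)) * x γ) • y γ from (hL2 _).symm]
    rw [tmul_sum]
    refine Finset.sum_congr rfl fun γ _ => ?_
    rw [tmul_smul, smul_tmul']
    congr 3
    ring
  calc ∑ α, ∑ β, (algebraMap B C (x α) * p β) ⊗ₜ[A] trCB (algebraMap B C (y α) * q β)
      = ∑ α, ∑ β, ∑ γ,
        (trBA ((x γ * trCB (q β)) * y α) • (algebraMap B C (x α) * p β)) ⊗ₜ[A] y γ := by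
        simp_rw [step1, step2]
    _ = ∑ γ, ∑ β, ∑ α,
        (trBA ((x γ * trCB (q β)) * y α) • (algebraMap B C (x α) * p β)) ⊗ₜ[A] y γ := by
        rw [show (∑ α, ∑ β, ∑ γ,
          (trBA ((x γ * trCB (q β)) * y α) • (algebraMap B C (x α) * p β)) ⊗ₜ[A] y γ)
          = ∑ α, ∑ γ, ∑ β,
          (trBA ((x γ * trCB (q β)) * y α) • (algebraMap B C (x α) * p β)) ⊗ₜ[A] y γ
          from Finset.sum_congr rfl fun α _ => Finset.sum_comm, Finset.sum_comm]
        exact Finset.sum_congr rfl fun γ _ => Finset.sum_comm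
    _ = ∑ γ, (∑ β, ∑ α,
        trBA ((x γ * trCB (q β)) * y α) • (algebraMap B C (x α) * p β)) ⊗ₜ[A] y γ := by
        refine Finset.sum_congr rfl fun γ _ => ?_
        conv_rhs => rw [sum_tmul]
        exact Finset.sum_congr rfl fun β _ => (sum_tmul _ _ _).symm
    _ = ∑ γ, (algebraMap B C (x γ)) ⊗ₜ[A] y γ := by
        refine Finset.sum_congr rfl fun γ _ => ?_
        congr 1
        have inner : ∀ β, ∑ α, trBA ((x γ * trCB (q β)) * y α) • (algebraMap B C (x α) * p β)
            = algebraMap B C (x γ * trCB (q β)) * p β := by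
          intro β
          simp_rw [← smul_mul_assoc]
          rw [← Finset.sum_mul]
          congr 1
          calc ∑ α, trBA ((x γ * trCB (q β)) * y α) • algebraMap B C (x α)
              = algebraMap B C (∑ α, trBA ((x γ * trCB (q β)) * y α) • x α) := by
                rw [map_sum]
                refine Finset.sum_congr rfl fun α _ => ?_
                rw [Algebra.smul_def, Algebra.smul_def, (algebraMap B C).map_mul,
                  ← IsScalarTower.algebraMap_apply]
            _ = algebraMap B C (x γ * trCB (q β)) := by rw [hL1]
        simp_rw [inner]
        simp_rw [map_mul, mul_assoc, ← Finset.mul_sum]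
        rw [show (∑ β, algebraMap B C (trCB (q β)) * p β) = 1 from by
          simp_rw [← Algebra.smul_def]; exact hL3, mul_one]
end

section
/- Let A ⊆ B ⊆ C be a chain of Frobenius extensions with dual bases (x_α),(y_α) of B over A and (p_β),(q_β) of C over B. Then for every f ∈ C, in C ⊗_A B one has Σ_α (f·ι^C_B(x_α)) ⊗ y_α = Σ_{α,β} (ι^C_B(x_α)·p_β) ⊗ ∂^C_B(f·ι^C_B(y_α)·q_β). -/
open TensorProduct

/-- For a chain of Frobenius extensions and f in C: sum_a (f * iota(x a)) tensor (y a) = sum_{a,b} (iota(x a) * p b) tensor trCB(f * iota(y a) * q b), in C tensor_A B. -/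
theorem chain_coproduct_partial_trace_poly
    (A B C : Type*) [CommRing A] [CommRing B] [CommRing C]
    [Algebra A B] [Algebra B C] [Algebra A C] [IsScalarTower A B C]
    (trBA : B →ₗ[A] A) (trCB : C →ₗ[B] B)
    (IB IC : Type*) [Fintype IB] [Fintype IC] [DecidableEq IB] [DecidableEq IC]
    (x y : IB → B) (p q : IC → C)
    (hxy : ∀ α β, trBA (x α * y β) = if α = β then 1 else 0)
    (hx : Submodule.span A (Set.range x) = ⊤)
    (hy : Submodule.span A (Set.range y) = ⊤)
    (hpq : ∀ α β, trCB (p α * q β) = if α = β then 1 else 0)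
    (hp : Submodule.span B (Set.range p) = ⊤)
    (hq : Submodule.span B (Set.range q) = ⊤) :
    ∀ f : C, ∑ α, (f * algebraMap B C (x α)) ⊗ₜ[A] y α =
      ∑ α, ∑ β, (algebraMap B C (x α) * p β) ⊗ₜ[A] trCB (f * algebraMap B C (y α) * q β) := by
  have hexpB : ∀ c : B, ∑ α, trBA (c * x α) • y α = c := by
    have h : (∑ α, (LinearMap.toSpanSingleton A B (y α)).comp
        (trBA.comp (LinearMap.mulRight A (x α)))) = LinearMap.id := by
      apply LinearMap.ext_on hy
      rintro _ ⟨β, rfl⟩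
      simp only [LinearMap.sum_apply, LinearMap.comp_apply, LinearMap.mulRight_apply,
        LinearMap.toSpanSingleton_apply, LinearMap.id_apply]
      have : ∀ α, trBA (y β * x α) = if α = β then 1 else 0 := by
        intro α; rw [mul_comm]; exact hxy α β
      simp [this]
    intro c
    have := congrArg (fun g => g c) h
    simpa [LinearMap.sum_apply] using this
  have hexpB2 : ∀ c : B, ∑ γ, trBA (c * y γ) • x γ = c := by
    have h : (∑ γ, (LinearMap.toSpanSingleton A B (x γ)).comp
        (trBA.comp (LinearMap.mulRight A (y γ)))) = LinearMap.id := by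
      apply LinearMap.ext_on hx
      rintro _ ⟨β, rfl⟩
      simp [hxy]
    intro c
    have := congrArg (fun g => g c) h
    simpa [LinearMap.sum_apply] using this
  have hexpC : ∀ c : C, ∑ β, trCB (c * q β) • p β = c := by
    have h : (∑ β, (LinearMap.toSpanSingleton B C (p β)).comp
        (trCB.comp (LinearMap.mulRight B (q β)))) = LinearMap.id := by
      apply LinearMap.ext_on hp
      rintro _ ⟨β, rfl⟩
      simp [hpq]
    intro c
    have := congrArg (fun g => g c) h
    simpa [LinearMap.sum_apply] using this
  set ι := (IsScalarTower.toAlgHom A B C).toLinearMap with hι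
  have hιdef : ∀ b : B, ι b = algebraMap B C b := fun _ => rfl
  have key : ∀ (b : B) (r : C),
      ∑ α, (algebraMap B C (b * x α) * r) ⊗ₜ[A] y α
        = ∑ γ, (algebraMap B C (x γ) * r) ⊗ₜ[A] (y γ * b) := by
    intro b r
    calc ∑ α, (algebraMap B C (b * x α) * r) ⊗ₜ[A] y α
        = ∑ α, ∑ γ, (algebraMap B C (x γ) * r) ⊗ₜ[A] (trBA (b * x α * y γ) • y α) := by
          refine Finset.sum_congr rfl fun α _ => ?_
          conv_lhs => rw [← hιdef, ← hexpB2 (b * x α), map_sum, Finset.sum_mul, sum_tmul]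
          refine Finset.sum_congr rfl fun γ _ => ?_
          rw [map_smul, hιdef, smul_mul_assoc, smul_tmul]
      _ = ∑ γ, (algebraMap B C (x γ) * r) ⊗ₜ[A] (y γ * b) := by
          rw [Finset.sum_comm]
          refine Finset.sum_congr rfl fun γ _ => ?_
          rw [← tmul_sum]
          congr 1
          have h2 : ∀ α, b * x α * y γ = (b * y γ) * x α := fun α => by ring
          simp_rw [h2]
          rw [hexpB (b * y γ), mul_comm]
  intro f
  calc ∑ α, (f * algebraMap B C (x α)) ⊗ₜ[A] y α
      = ∑ α, ∑ β, (algebraMap B C (trCB (f * q β) * x α) * p β) ⊗ₜ[A] y α := by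
        refine Finset.sum_congr rfl fun α _ => ?_
        conv_lhs => rw [← hexpC f]
        rw [Finset.sum_mul, sum_tmul]
        refine Finset.sum_congr rfl fun β _ => ?_
        congr 1
        rw [Algebra.smul_def, map_mul (algebraMap B C)]
        ring
    _ = ∑ β, ∑ γ, (algebraMap B C (x γ) * p β) ⊗ₜ[A] (y γ * trCB (f * q β)) := by
        rw [Finset.sum_comm]
        exact Finset.sum_congr rfl fun β _ => key (trCB (f * q β)) (p β)
    _ = ∑ α, ∑ β, (algebraMap B C (x α) * p β) ⊗ₜ[A] trCB (f * algebraMap B C (y α) * q β) := by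
        rw [Finset.sum_comm]
        refine Finset.sum_congr rfl fun γ _ => Finset.sum_congr rfl fun β _ => ?_
        congr 1
        have h3 : f * algebraMap B C (y γ) * q β = y γ • (f * q β) := by
          rw [Algebra.smul_def]; ring
        rw [h3, map_smul trCB, smul_eq_mul]
end

section
/- Let A ⊆ B ⊆ C be a chain of Frobenius extensions with dual bases (x_α),(y_α) of B over A and (p_β),(q_β) of C over B. Then Σ_{α,β} ι^C_B(x_α)·p_β · ι^C_B(∂^C_B(ι^C_B(y_α)·q_β)) = ι^C_B(μ^B_A) in C, where μ^B_A = Σ_α x_α y_α ∈ B. -/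
/-- For a chain of Frobenius extensions: sum_{a,b} iota(x a) * p b * iota(trCB(iota(y a) * q b)) = iota(muBA) in C. -/
theorem chain_partial_mu
    (A B C : Type*) [CommRing A] [CommRing B] [CommRing C]
    [Algebra A B] [Algebra B C] [Algebra A C] [IsScalarTower A B C]
    (trBA : B →ₗ[A] A) (trCB : C →ₗ[B] B)
    (IB IC : Type*) [Fintype IB] [Fintype IC] [DecidableEq IB] [DecidableEq IC]
    (x y : IB → B) (p q : IC → C)
    (hxy : ∀ α β, trBA (x α * y β) = if α = β then 1 else 0)
    (hx : Submodule.span A (Set.range x) = ⊤)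
    (hy : Submodule.span A (Set.range y) = ⊤)
    (hpq : ∀ α β, trCB (p α * q β) = if α = β then 1 else 0)
    (hp : Submodule.span B (Set.range p) = ⊤)
    (hq : Submodule.span B (Set.range q) = ⊤) :
    ∑ α, ∑ β, algebraMap B C (x α) * p β * algebraMap B C (trCB (algebraMap B C (y α) * q β)) =
      algebraMap B C (∑ α, x α * y α) := by
  have key : ∀ c : C, ∑ β, p β * algebraMap B C (trCB (c * q β)) = c := by
    intro c
    have hc : c ∈ Submodule.span B (Set.range p) := hp ▸ Submodule.mem_top
    induction hc using Submodule.span_induction with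
    | mem z hz =>
      obtain ⟨γ, rfl⟩ := hz
      simp only [hpq]
      rw [Finset.sum_eq_single γ]
      · simp
      · intro β _ hβ
        rw [if_neg (fun h => hβ h.symm)]
        simp
      · simp
    | zero => simp
    | add a b _ _ ha hb =>
      simp only [add_mul, map_add, mul_add, Finset.sum_add_distrib, ha, hb]
    | smul b a _ ha =>
      have : ∀ β, (b • a) * q β = b • (a * q β) := fun β => smul_mul_assoc b a (q β)
      simp only [this, map_smul]
      calc ∑ β, p β * algebraMap B C (b • trCB (a * q β))
          = b • ∑ β, p β * algebraMap B C (trCB (a * q β)) := by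
            rw [Finset.smul_sum]
            refine Finset.sum_congr rfl fun β _ => ?_
            simp only [Algebra.smul_def, map_mul, Algebra.algebraMap_self, RingHom.id_apply]
            ring
        _ = b • a := by rw [ha]
  calc ∑ α, ∑ β, algebraMap B C (x α) * p β * algebraMap B C (trCB (algebraMap B C (y α) * q β))
      = ∑ α, algebraMap B C (x α) * ∑ β, p β * algebraMap B C (trCB (algebraMap B C (y α) * q β)) := by
        refine Finset.sum_congr rfl fun α _ => ?_
        rw [Finset.mul_sum]
        exact Finset.sum_congr rfl fun β _ => (mul_assoc _ _ _)
    _ = ∑ α, algebraMap B C (x α) * algebraMap B C (y α) := by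
        simp only [key]
    _ = algebraMap B C (∑ α, x α * y α) := by
        rw [map_sum]
        exact Finset.sum_congr rfl fun α _ => (map_mul _ _ _).symm
end

section
/- In a compatible Frobenius square, for every f ∈ R one has the following equality in R^r ⊗_{R^{rb}} R^b: Σ_γ u_γ ⊗ ∂_b(f · ι_r(v_γ)) = Σ_β ∂_r(f · ι_b(p_β)) ⊗ q_β. -/
open TensorProduct

/-- The two expressions for the sideways crossing agree: for every f in R,
sum_g (u g) tensor db(f * iota_r (v g)) = sum_b dr(f * iota_b (p b)) tensor (q b),
in the tensor product of Rr and Rb over Rrb. -/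
theorem square_sideways_crossing
    (Rrb Rr Rb R : Type*)
    [CommRing Rrb] [CommRing Rr] [CommRing Rb] [CommRing R]
    [Algebra Rrb Rr] [Algebra Rrb Rb] [Algebra Rr R] [Algebra Rb R]
    [Algebra Rrb R] [IsScalarTower Rrb Rr R] [IsScalarTower Rrb Rb R]
    (dr : R →ₗ[Rr] Rr) (db : R →ₗ[Rb] Rb)
    (drrb : Rr →ₗ[Rrb] Rrb) (dbrb : Rb →ₗ[Rrb] Rrb)
    (Is Ix Iu Ip : Type*) [Fintype Is] [Fintype Ix] [Fintype Iu] [Fintype Ip]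
    [DecidableEq Is] [DecidableEq Ix] [DecidableEq Iu] [DecidableEq Ip]
    (s t : Is → R) (x y : Ix → R) (u v : Iu → Rr) (p q : Ip → Rb)
    (hst : ∀ a b, dr (s a * t b) = if a = b then 1 else 0)
    (hs : Submodule.span Rr (Set.range s) = ⊤)
    (ht : Submodule.span Rr (Set.range t) = ⊤)
    (hxy : ∀ a b, db (x a * y b) = if a = b then 1 else 0)
    (hx : Submodule.span Rb (Set.range x) = ⊤)
    (hy : Submodule.span Rb (Set.range y) = ⊤)
    (huv : ∀ a b, drrb (u a * v b) = if a = b then 1 else 0)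
    (hu : Submodule.span Rrb (Set.range u) = ⊤)
    (hv : Submodule.span Rrb (Set.range v) = ⊤)
    (hpq : ∀ a b, dbrb (p a * q b) = if a = b then 1 else 0)
    (hp : Submodule.span Rrb (Set.range p) = ⊤)
    (hq : Submodule.span Rrb (Set.range q) = ⊤)
    (hcompat : ∀ f : R, drrb (dr f) = dbrb (db f)) :
    ∀ f : R, ∑ g, (u g) ⊗ₜ[Rrb] (db (f * algebraMap Rr R (v g))) =
      ∑ b, (dr (f * algebraMap Rb R (p b))) ⊗ₜ[Rrb] (q b) := by

  -- Expansion lemma for (p, q) dual bases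
  have hA : ∀ z : Rb, ∑ b, dbrb (p b * z) • q b = z := by
    have hmap : (∑ b : Ip, (LinearMap.toSpanSingleton Rrb Rb (q b)).comp
        (dbrb.comp (LinearMap.mulLeft Rrb (p b)))) = LinearMap.id := by
      apply LinearMap.ext_on hq
      rintro _ ⟨b', rfl⟩
      simp only [LinearMap.sum_apply, LinearMap.comp_apply, LinearMap.mulLeft_apply,
        LinearMap.toSpanSingleton_apply, LinearMap.id_apply, hpq]
      simp [Finset.sum_ite_eq, eq_comm]
    intro z
    have := LinearMap.congr_fun hmap z
    simpa [LinearMap.sum_apply, LinearMap.comp_apply, LinearMap.mulLeft_apply,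
      LinearMap.toSpanSingleton_apply] using this
  -- Expansion lemma for (u, v) dual bases
  have hB : ∀ w : Rr, ∑ g, drrb (w * v g) • u g = w := by
    have hmap : (∑ g : Iu, (LinearMap.toSpanSingleton Rrb Rr (u g)).comp
        (drrb.comp (LinearMap.mulRight Rrb (v g)))) = LinearMap.id := by
      apply LinearMap.ext_on hu
      rintro _ ⟨g', rfl⟩
      simp only [LinearMap.sum_apply, LinearMap.comp_apply, LinearMap.mulRight_apply,
        LinearMap.toSpanSingleton_apply, LinearMap.id_apply, huv]
      simp [Finset.sum_ite_eq, eq_comm]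
    intro w
    have := LinearMap.congr_fun hmap w
    simpa [LinearMap.sum_apply, LinearMap.comp_apply, LinearMap.mulRight_apply,
      LinearMap.toSpanSingleton_apply] using this
  intro f
  -- coefficient identity
  have key : ∀ (b : Ip) (g : Iu),
      dbrb (p b * db (f * algebraMap Rr R (v g))) =
      drrb (dr (f * algebraMap Rb R (p b)) * v g) := by
    intro b g
    have h1 : p b * db (f * algebraMap Rr R (v g)) =
        db (algebraMap Rb R (p b) * (f * algebraMap Rr R (v g))) := by
      rw [← Algebra.smul_def, map_smul, smul_eq_mul]
    have h2 : dr (f * algebraMap Rb R (p b)) * v g =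
        dr (algebraMap Rr R (v g) * (f * algebraMap Rb R (p b))) := by
      rw [← Algebra.smul_def, map_smul, smul_eq_mul, mul_comm]
    rw [h1, h2, ← hcompat]
    ring_nf
  calc ∑ g, (u g) ⊗ₜ[Rrb] (db (f * algebraMap Rr R (v g)))
      = ∑ g, (u g) ⊗ₜ[Rrb] (∑ b, dbrb (p b * db (f * algebraMap Rr R (v g))) • q b) := by
        simp_rw [hA]
    _ = ∑ g, ∑ b, (dbrb (p b * db (f * algebraMap Rr R (v g))) • u g) ⊗ₜ[Rrb] (q b) := by
        simp_rw [tmul_sum, tmul_smul, smul_tmul']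
    _ = ∑ b, ∑ g, (drrb (dr (f * algebraMap Rb R (p b)) * v g) • u g) ⊗ₜ[Rrb] (q b) := by
        rw [Finset.sum_comm]
        simp_rw [key]
    _ = ∑ b, (∑ g, drrb (dr (f * algebraMap Rb R (p b)) * v g) • u g) ⊗ₜ[Rrb] (q b) := by
        simp_rw [sum_tmul]
    _ = ∑ b, (dr (f * algebraMap Rb R (p b))) ⊗ₜ[Rrb] (q b) := by
        simp_rw [hB]
end

section
/- In a compatible Frobenius square, let (X_λ),(Y_λ) be dual bases of R over R^{rb} for the composite trace ∂_{rb} = ∂^r_{rb} ∘ ∂_r = ∂^b_{rb} ∘ ∂_b. Then for every f ∈ R one has the following equality in R^r ⊗_{R^{rb}} R^b: Σ_β ∂_r(f · ι_b(p_β)) ⊗ q_β = Σ_λ ∂_r(f · X_λ) ⊗ ∂_b(Y_λ). -/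
open TensorProduct

lemma recon_aux {A B : Type*} [CommRing A] [CommRing B] [Algebra A B]
    (d : B →ₗ[A] A) {I : Type*} [Fintype I] [DecidableEq I]
    (X Y : I → B) (h : ∀ a b, d (X a * Y b) = if a = b then 1 else 0)
    (hX : Submodule.span A (Set.range X) = ⊤) (b : B) :
    b = ∑ l, d (b * Y l) • X l := by
  let φ : B →ₗ[A] B :=
    ∑ l, ((d.comp (LinearMap.mulRight A (Y l))).smulRight (X l))
  have hφ : φ = LinearMap.id := by
    apply LinearMap.ext_on hX
    rintro _ ⟨a, rfl⟩
    simp [φ, LinearMap.sum_apply, h, ite_smul]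
  have := congrFun (congrArg (fun f => f.toFun) hφ) b
  simpa [φ, LinearMap.sum_apply, eq_comm] using this

/-- The second equality for the sideways crossing: for every f in R,
sum_b dr(f * iota_b (p b)) tensor (q b) = sum_l dr(f * X l) tensor db(Y l),
in the tensor product of Rr and Rb over Rrb, where (X l),(Y l) are dual bases of
R over Rrb for the composite trace. -/
theorem square_sideways_crossing_composite
    (Rrb Rr Rb R : Type*)
    [CommRing Rrb] [CommRing Rr] [CommRing Rb] [CommRing R]
    [Algebra Rrb Rr] [Algebra Rrb Rb] [Algebra Rr R] [Algebra Rb R]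
    [Algebra Rrb R] [IsScalarTower Rrb Rr R] [IsScalarTower Rrb Rb R]
    (dr : R →ₗ[Rr] Rr) (db : R →ₗ[Rb] Rb)
    (drrb : Rr →ₗ[Rrb] Rrb) (dbrb : Rb →ₗ[Rrb] Rrb)
    (Is Ix Iu Ip : Type*) [Fintype Is] [Fintype Ix] [Fintype Iu] [Fintype Ip]
    [DecidableEq Is] [DecidableEq Ix] [DecidableEq Iu] [DecidableEq Ip]
    (s t : Is → R) (x y : Ix → R) (u v : Iu → Rr) (p q : Ip → Rb)
    (hst : ∀ a b, dr (s a * t b) = if a = b then 1 else 0)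
    (hs : Submodule.span Rr (Set.range s) = ⊤)
    (ht : Submodule.span Rr (Set.range t) = ⊤)
    (hxy : ∀ a b, db (x a * y b) = if a = b then 1 else 0)
    (hx : Submodule.span Rb (Set.range x) = ⊤)
    (hy : Submodule.span Rb (Set.range y) = ⊤)
    (huv : ∀ a b, drrb (u a * v b) = if a = b then 1 else 0)
    (hu : Submodule.span Rrb (Set.range u) = ⊤)
    (hv : Submodule.span Rrb (Set.range v) = ⊤)
    (hpq : ∀ a b, dbrb (p a * q b) = if a = b then 1 else 0)
    (hp : Submodule.span Rrb (Set.range p) = ⊤)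
    (hq : Submodule.span Rrb (Set.range q) = ⊤)
    (hcompat : ∀ f : R, drrb (dr f) = dbrb (db f))
    (L : Type*) [Fintype L] [DecidableEq L]
    (X Y : L → R)
    (hXY : ∀ a b, drrb (dr (X a * Y b)) = if a = b then 1 else 0)
    (hX : Submodule.span Rrb (Set.range X) = ⊤)
    (hY : Submodule.span Rrb (Set.range Y) = ⊤) :
    ∀ f : R, ∑ b, (dr (f * algebraMap Rb R (p b))) ⊗ₜ[Rrb] (q b) =
      ∑ l, (dr (f * X l)) ⊗ₜ[Rrb] (db (Y l)) := by
  intro f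
  -- composite trace as Rrb-linear map
  let D : R →ₗ[Rrb] Rrb := drrb.comp (dr.restrictScalars Rrb)
  have hD : ∀ a b, D (X a * Y b) = if a = b then 1 else 0 := hXY
  -- reconstruction over (X, Y)
  have key2 : ∀ g : R, g = ∑ l, D (g * Y l) • X l := recon_aux D X Y hD hX
  -- reconstruction in Rb over (q, p)
  have key1 : ∀ b : Rb, b = ∑ β, dbrb (b * p β) • q β := by
    refine recon_aux dbrb q p (fun a b => ?_) hq
    rw [mul_comm, hpq]
    simp [eq_comm]
  -- dr commutes with Rrb-smul
  have hdrsmul : ∀ (c : Rrb) (r : R), dr (c • r) = c • dr r := fun c r =>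
    (dr.restrictScalars Rrb).map_smul c r
  -- coefficient
  set c : Ip → L → Rrb := fun β l => drrb (dr (algebraMap Rb R (p β) * Y l)) with hc
  -- LHS expansion
  have hL : ∀ β, dr (f * algebraMap Rb R (p β)) =
      ∑ l, c β l • dr (f * X l) := by
    intro β
    conv_lhs => rw [key2 (algebraMap Rb R (p β))]
    rw [Finset.mul_sum, map_sum]
    refine Finset.sum_congr rfl fun l _ => ?_
    rw [mul_smul_comm, hdrsmul]
    rfl
  -- RHS expansion
  have hR : ∀ l, db (Y l) = ∑ β, c β l • q β := by
    intro l
    conv_lhs => rw [key1 (db (Y l))]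
    refine Finset.sum_congr rfl fun β _ => ?_
    congr 1
    have : db (Y l) * p β = p β • db (Y l) := by
      rw [smul_eq_mul, mul_comm]
    rw [this, ← db.map_smul, ← hcompat]
    congr 1
    rw [Algebra.smul_def, mul_comm]
  calc ∑ β, (dr (f * algebraMap Rb R (p β))) ⊗ₜ[Rrb] (q β)
      = ∑ β, ∑ l, (c β l • dr (f * X l)) ⊗ₜ[Rrb] (q β) := by
        refine Finset.sum_congr rfl fun β _ => ?_
        rw [hL β, sum_tmul]
    _ = ∑ l, ∑ β, (dr (f * X l)) ⊗ₜ[Rrb] (c β l • q β) := by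
        rw [Finset.sum_comm]
        exact Finset.sum_congr rfl fun l _ => Finset.sum_congr rfl fun β _ =>
          (smul_tmul _ _ _)
    _ = ∑ l, (dr (f * X l)) ⊗ₜ[Rrb] (db (Y l)) := by
        refine Finset.sum_congr rfl fun l _ => ?_
        rw [hR l, tmul_sum]
end

section
/- In a compatible Frobenius square, suppose R is generated as a ring by ι_r(R^r) ∪ ι_b(R^b). Let (X_λ),(Y_λ) be dual bases of R over R^{rb} for the composite trace ∂_{rb}. Then for every f ∈ R one has Σ_λ ι_r(∂_r(f·X_λ)) · ι_b(∂_b(Y_λ)) = f · Σ_λ ι_r(∂_r(X_λ)) · ι_b(∂_b(Y_λ)) in R; i.e. the map f ↦ Σ_λ ι_r(∂_r(f·X_λ)) · ι_b(∂_b(Y_λ)) is multiplication by its value at 1 (the clockwise Reidemeister II relation). -/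
/-- The clockwise Reidemeister II relation: if R is generated as a ring by the
images of Rr and Rb, then the map f ↦ sum_l iota_r(dr(f * X l)) * iota_b(db(Y l))
is multiplication by its value at 1. -/
theorem square_reidemeister_II_cw
    (Rrb Rr Rb R : Type*)
    [CommRing Rrb] [CommRing Rr] [CommRing Rb] [CommRing R]
    [Algebra Rrb Rr] [Algebra Rrb Rb] [Algebra Rr R] [Algebra Rb R]
    [Algebra Rrb R] [IsScalarTower Rrb Rr R] [IsScalarTower Rrb Rb R]
    (dr : R →ₗ[Rr] Rr) (db : R →ₗ[Rb] Rb)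
    (drrb : Rr →ₗ[Rrb] Rrb) (dbrb : Rb →ₗ[Rrb] Rrb)
    (Is Ix Iu Ip : Type*) [Fintype Is] [Fintype Ix] [Fintype Iu] [Fintype Ip]
    [DecidableEq Is] [DecidableEq Ix] [DecidableEq Iu] [DecidableEq Ip]
    (s t : Is → R) (x y : Ix → R) (u v : Iu → Rr) (p q : Ip → Rb)
    (hst : ∀ a b, dr (s a * t b) = if a = b then 1 else 0)
    (hs : Submodule.span Rr (Set.range s) = ⊤)
    (ht : Submodule.span Rr (Set.range t) = ⊤)
    (hxy : ∀ a b, db (x a * y b) = if a = b then 1 else 0)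
    (hx : Submodule.span Rb (Set.range x) = ⊤)
    (hy : Submodule.span Rb (Set.range y) = ⊤)
    (huv : ∀ a b, drrb (u a * v b) = if a = b then 1 else 0)
    (hu : Submodule.span Rrb (Set.range u) = ⊤)
    (hv : Submodule.span Rrb (Set.range v) = ⊤)
    (hpq : ∀ a b, dbrb (p a * q b) = if a = b then 1 else 0)
    (hp : Submodule.span Rrb (Set.range p) = ⊤)
    (hq : Submodule.span Rrb (Set.range q) = ⊤)
    (hcompat : ∀ f : R, drrb (dr f) = dbrb (db f))
    (L : Type*) [Fintype L] [DecidableEq L]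
    (X Y : L → R)
    (hXY : ∀ a b, drrb (dr (X a * Y b)) = if a = b then 1 else 0)
    (hX : Submodule.span Rrb (Set.range X) = ⊤)
    (hY : Submodule.span Rrb (Set.range Y) = ⊤)
    (hgen : Subring.closure
      (Set.range (algebraMap Rr R) ∪ Set.range (algebraMap Rb R)) = ⊤) :
    ∀ f : R, ∑ l, algebraMap Rr R (dr (f * X l)) * algebraMap Rb R (db (Y l)) =
      f * ∑ l, algebraMap Rr R (dr (X l)) * algebraMap Rb R (db (Y l)) := by
  -- expansion lemmas for the composite dual bases
  have exp1 : ∀ f : R, (∑ m, drrb (dr (f * Y m)) • X m) = f := by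
    intro f
    have hf : f ∈ Submodule.span Rrb (Set.range X) := by rw [hX]; trivial
    induction hf using Submodule.span_induction with
    | mem z hz =>
      obtain ⟨a, rfl⟩ := hz
      simp [hXY]
    | zero => simp
    | add f g _ _ hf hg =>
      simp only [add_mul, map_add, add_smul, Finset.sum_add_distrib, hf, hg]
    | smul c f _ hf =>
      calc (∑ m, drrb (dr (c • f * Y m)) • X m)
          = c • ∑ m, drrb (dr (f * Y m)) • X m := by
            rw [Finset.smul_sum]
            refine Finset.sum_congr rfl fun m _ => ?_
            rw [smul_mul_assoc, LinearMap.map_smul_of_tower, map_smul, smul_eq_mul,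
              mul_smul]
        _ = c • f := by rw [hf]
  have exp2 : ∀ f : R, (∑ m, drrb (dr (X m * f)) • Y m) = f := by
    intro f
    have hf : f ∈ Submodule.span Rrb (Set.range Y) := by rw [hY]; trivial
    induction hf using Submodule.span_induction with
    | mem z hz =>
      obtain ⟨a, rfl⟩ := hz
      simp [hXY]
    | zero => simp
    | add f g _ _ hf hg =>
      simp only [mul_add, map_add, add_smul, Finset.sum_add_distrib, hf, hg]
    | smul c f _ hf =>
      calc (∑ m, drrb (dr (X m * (c • f))) • Y m)
          = c • ∑ m, drrb (dr (X m * f)) • Y m := by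
            rw [Finset.smul_sum]
            refine Finset.sum_congr rfl fun m _ => ?_
            rw [mul_smul_comm, LinearMap.map_smul_of_tower, map_smul, smul_eq_mul,
              mul_smul]
        _ = c • f := by rw [hf]
  -- scalars pass through the algebra maps
  have hsmul_r : ∀ (c : Rrb) (a : Rr),
      algebraMap Rr R (c • a) = algebraMap Rrb R c * algebraMap Rr R a := by
    intro c a
    rw [Algebra.smul_def, map_mul, ← IsScalarTower.algebraMap_apply]
  have hsmul_b : ∀ (c : Rrb) (a : Rb),
      algebraMap Rb R (c • a) = algebraMap Rrb R c * algebraMap Rb R a := by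
    intro c a
    rw [Algebra.smul_def, map_mul, ← IsScalarTower.algebraMap_apply]
  -- Casimir element identity
  have casimir : ∀ g h : R,
      (∑ l, algebraMap Rr R (dr (g * (h * X l))) * algebraMap Rb R (db (Y l))) =
      ∑ l, algebraMap Rr R (dr (g * X l)) * algebraMap Rb R (db (h * Y l)) := by
    intro g h
    have lhs_eq : ∀ l, algebraMap Rr R (dr (g * (h * X l))) * algebraMap Rb R (db (Y l)) =
        ∑ m, algebraMap Rrb R (drrb (dr (h * X l * Y m))) *
          (algebraMap Rr R (dr (g * X m)) * algebraMap Rb R (db (Y l))) := by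
      intro l
      conv_lhs => rw [← exp1 (h * X l)]
      rw [Finset.mul_sum, map_sum, map_sum, Finset.sum_mul]
      refine Finset.sum_congr rfl fun m _ => ?_
      rw [mul_smul_comm, LinearMap.map_smul_of_tower, hsmul_r, mul_assoc]
    have rhs_eq : ∀ l, algebraMap Rr R (dr (g * X l)) * algebraMap Rb R (db (h * Y l)) =
        ∑ m, algebraMap Rrb R (drrb (dr (X m * (h * Y l)))) *
          (algebraMap Rr R (dr (g * X l)) * algebraMap Rb R (db (Y m))) := by
      intro l
      conv_lhs => rw [← exp2 (h * Y l)]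
      rw [map_sum, map_sum, Finset.mul_sum]
      refine Finset.sum_congr rfl fun m _ => ?_
      rw [LinearMap.map_smul_of_tower, hsmul_b]
      ring
    calc (∑ l, algebraMap Rr R (dr (g * (h * X l))) * algebraMap Rb R (db (Y l)))
        = ∑ l, ∑ m, algebraMap Rrb R (drrb (dr (h * X l * Y m))) *
            (algebraMap Rr R (dr (g * X m)) * algebraMap Rb R (db (Y l))) :=
          Finset.sum_congr rfl fun l _ => lhs_eq l
      _ = ∑ m, ∑ l, algebraMap Rrb R (drrb (dr (X l * (h * Y m)))) *
            (algebraMap Rr R (dr (g * X m)) * algebraMap Rb R (db (Y l))) := by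
          rw [Finset.sum_comm]
          refine Finset.sum_congr rfl fun m _ => Finset.sum_congr rfl fun l _ => ?_
          congr 3
          ring
      _ = ∑ m, algebraMap Rr R (dr (g * X m)) * algebraMap Rb R (db (h * Y m)) :=
          Finset.sum_congr rfl fun m _ => (rhs_eq m).symm
  -- main induction on the ring generation
  have key : ∀ f : R, ∀ g : R,
      (∑ l, algebraMap Rr R (dr (f * g * X l)) * algebraMap Rb R (db (Y l))) =
      f * ∑ l, algebraMap Rr R (dr (g * X l)) * algebraMap Rb R (db (Y l)) := by
    intro f
    have hf : f ∈ Subring.closure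
        (Set.range (algebraMap Rr R) ∪ Set.range (algebraMap Rb R)) := by
      rw [hgen]; trivial
    induction hf using Subring.closure_induction with
    | mem z hz =>
      rcases hz with ⟨a, rfl⟩ | ⟨b, rfl⟩
      · intro g
        rw [Finset.mul_sum]
        refine Finset.sum_congr rfl fun l _ => ?_
        have : algebraMap Rr R a * g * X l = a • (g * X l) := by
          rw [Algebra.smul_def, mul_assoc]
        rw [this, map_smul, smul_eq_mul, map_mul (algebraMap Rr R), mul_assoc]
      · intro g
        have h1 : (∑ l, algebraMap Rr R (dr (algebraMap Rb R b * g * X l)) *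
            algebraMap Rb R (db (Y l))) =
            ∑ l, algebraMap Rr R (dr (g * X l)) *
              algebraMap Rb R (db (algebraMap Rb R b * Y l)) := by
          have := casimir g (algebraMap Rb R b)
          rw [← this]
          refine Finset.sum_congr rfl fun l _ => ?_
          congr 3
          ring
        rw [h1, Finset.mul_sum]
        refine Finset.sum_congr rfl fun l _ => ?_
        have : algebraMap Rb R b * Y l = b • Y l := (Algebra.smul_def b (Y l)).symm
        rw [this, map_smul, smul_eq_mul, map_mul (algebraMap Rb R)]
        ring
    | zero => intro g; simp
    | one => intro g; simp
    | add f1 f2 _ _ h1 h2 =>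
      intro g
      simp only [add_mul, map_add, Finset.sum_add_distrib, h1 g, h2 g]
    | neg f1 _ h1 =>
      intro g
      simp only [neg_mul, map_neg, Finset.sum_neg_distrib, h1 g]
    | mul f1 f2 _ _ h1 h2 =>
      intro g
      have : ∀ l : L, f1 * f2 * g * X l = f1 * (f2 * g) * X l := by intro l; ring
      calc (∑ l, algebraMap Rr R (dr (f1 * f2 * g * X l)) * algebraMap Rb R (db (Y l)))
          = ∑ l, algebraMap Rr R (dr (f1 * (f2 * g) * X l)) * algebraMap Rb R (db (Y l)) := by
            refine Finset.sum_congr rfl fun l _ => ?_; rw [this l]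
        _ = f1 * ∑ l, algebraMap Rr R (dr ((f2 * g) * X l)) * algebraMap Rb R (db (Y l)) :=
            h1 (f2 * g)
        _ = f1 * (f2 * ∑ l, algebraMap Rr R (dr (g * X l)) * algebraMap Rb R (db (Y l))) := by
            rw [h2 g]
        _ = f1 * f2 * ∑ l, algebraMap Rr R (dr (g * X l)) * algebraMap Rb R (db (Y l)) := by
            ring
  intro f
  have := key f 1
  simpa using this
end

section
/- In a compatible Frobenius square satisfying condition ⋆ (i.e. each element x_α of the chosen dual basis (x_α) of R over R^b lies in the image of ι_r : R^r → R), one has (Σ_β ι_r(∂_r(ι_b(p_β))) · ι_b(q_β)) · μ_r · μ_b = μ_{rb} in R, where μ_r = Σ_δ s_δ t_δ, μ_b = Σ_α x_α y_α, and μ_{rb} = Σ_λ X_λ Y_λ for any dual bases (X_λ),(Y_λ) of R over R^{rb} for the composite trace. In particular μ_{rb} is divisible by μ_r·μ_b in R. -/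
open Finset

private lemma alg_mul_trace {A B : Type*} [CommRing A] [CommRing B] [Algebra A B]
    (d : B →ₗ[A] A) (c : A) (g : B) :
    d (algebraMap A B c * g) = c * d g := by
  rw [← Algebra.smul_def, map_smul, smul_eq_mul]

private lemma expand_lemma {A B : Type*} [CommRing A] [CommRing B] [Algebra A B]
    (d : B →ₗ[A] A) {I : Type*} [Fintype I] [DecidableEq I]
    (x y : I → B) (hxy : ∀ a b, d (x a * y b) = if a = b then 1 else 0)
    (hy : Submodule.span A (Set.range y) = ⊤) (f : B) :
    ∑ a, algebraMap A B (d (x a * f)) * y a = f := by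
  let T : B →ₗ[A] B :=
    { toFun := fun f => ∑ a, algebraMap A B (d (x a * f)) * y a
      map_add' := fun f g => by
        simp only [mul_add, map_add, add_mul]
        exact Finset.sum_add_distrib
      map_smul' := fun c f => by
        simp only [RingHom.id_apply, Finset.smul_sum]
        refine Finset.sum_congr rfl fun a _ => ?_
        rw [mul_smul_comm, map_smul, smul_eq_mul, map_mul, ← Algebra.smul_def,
          smul_mul_assoc] }
  have hT : T = LinearMap.id := by
    apply LinearMap.ext_on hy
    rintro _ ⟨b, rfl⟩
    show ∑ a, algebraMap A B (d (x a * y b)) * y a = y b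
    simp only [hxy]
    simp [apply_ite (algebraMap A B), ite_mul, Finset.sum_ite_eq']
  exact DFunLike.congr_fun hT f

private lemma sum_rotate {I1 I2 I3 M : Type*} [Fintype I1] [Fintype I2] [Fintype I3]
    [AddCommMonoid M] (f : I1 → I2 → I3 → M) :
    ∑ a, ∑ b, ∑ c, f a b c = ∑ c, ∑ a, ∑ b, f a b c := by
  calc ∑ a, ∑ b, ∑ c, f a b c
      = ∑ a, ∑ c, ∑ b, f a b c := Finset.sum_congr rfl fun a _ => Finset.sum_comm
    _ = ∑ c, ∑ a, ∑ b, f a b c := Finset.sum_comm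

/-- Under condition star, the polynomial of the clockwise Reidemeister II move
times mu_r * mu_b equals mu_rb; in particular mu_r * mu_b divides mu_rb in R. -/
theorem square_star_mu_formula
    (Rrb Rr Rb R : Type*)
    [CommRing Rrb] [CommRing Rr] [CommRing Rb] [CommRing R]
    [Algebra Rrb Rr] [Algebra Rrb Rb] [Algebra Rr R] [Algebra Rb R]
    [Algebra Rrb R] [IsScalarTower Rrb Rr R] [IsScalarTower Rrb Rb R]
    (dr : R →ₗ[Rr] Rr) (db : R →ₗ[Rb] Rb)
    (drrb : Rr →ₗ[Rrb] Rrb) (dbrb : Rb →ₗ[Rrb] Rrb)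
    (Is Ix Iu Ip : Type*) [Fintype Is] [Fintype Ix] [Fintype Iu] [Fintype Ip]
    [DecidableEq Is] [DecidableEq Ix] [DecidableEq Iu] [DecidableEq Ip]
    (s t : Is → R) (x y : Ix → R) (u v : Iu → Rr) (p q : Ip → Rb)
    (hst : ∀ a b, dr (s a * t b) = if a = b then 1 else 0)
    (hs : Submodule.span Rr (Set.range s) = ⊤)
    (ht : Submodule.span Rr (Set.range t) = ⊤)
    (hxy : ∀ a b, db (x a * y b) = if a = b then 1 else 0)
    (hx : Submodule.span Rb (Set.range x) = ⊤)
    (hy : Submodule.span Rb (Set.range y) = ⊤)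
    (huv : ∀ a b, drrb (u a * v b) = if a = b then 1 else 0)
    (hu : Submodule.span Rrb (Set.range u) = ⊤)
    (hv : Submodule.span Rrb (Set.range v) = ⊤)
    (hpq : ∀ a b, dbrb (p a * q b) = if a = b then 1 else 0)
    (hp : Submodule.span Rrb (Set.range p) = ⊤)
    (hq : Submodule.span Rrb (Set.range q) = ⊤)
    (hcompat : ∀ f : R, drrb (dr f) = dbrb (db f))
    (L : Type*) [Fintype L] [DecidableEq L]
    (X Y : L → R)
    (hXY : ∀ a b, drrb (dr (X a * Y b)) = if a = b then 1 else 0)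
    (hX : Submodule.span Rrb (Set.range X) = ⊤)
    (hY : Submodule.span Rrb (Set.range Y) = ⊤)
    (hstar : ∀ a, x a ∈ Set.range (algebraMap Rr R)) :
    (∑ b, algebraMap Rr R (dr (algebraMap Rb R (p b))) * algebraMap Rb R (q b)) *
        ((∑ d, s d * t d) * (∑ a, x a * y a)) = ∑ l, X l * Y l ∧
      ((∑ d, s d * t d) * (∑ a, x a * y a)) ∣ ∑ l, X l * Y l := by
  choose xt hxt using hstar
  -- basic expansion facts
  have Ey : ∀ f : R, ∑ a, algebraMap Rb R (db (x a * f)) * y a = f :=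
    expand_lemma db x y hxy hy
  have Et : ∀ f : R, ∑ d, algebraMap Rr R (dr (s d * f)) * t d = f :=
    expand_lemma dr s t hst ht
  have Eq' : ∀ c : Rb, ∑ b, algebraMap Rrb Rb (dbrb (p b * c)) * q b = c :=
    expand_lemma dbrb p q hpq hq
  have Ev : ∀ c : Rr, ∑ g, algebraMap Rrb Rr (drrb (u g * c)) * v g = c :=
    expand_lemma drrb u v huv hv
  -- composite trace
  set D : R →ₗ[Rrb] Rrb := drrb ∘ₗ (dr.restrictScalars Rrb) with hD
  have hDapp : ∀ f : R, D f = drrb (dr f) := fun f => rfl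
  have hYX : ∀ a b, D (Y a * X b) = if a = b then 1 else 0 := by
    intro a b
    rw [hDapp, mul_comm, hXY]
    simp [eq_comm]
  have EX : ∀ f : R, ∑ l, algebraMap Rrb R (D (Y l * f)) * X l = f :=
    expand_lemma D Y X hYX hX
  -- claim1 : expanding an element of ι_r(Rr) in R using (u,v)
  have claim1 : ∀ c : Rr, algebraMap Rr R c
      = ∑ g, algebraMap Rrb R (drrb (u g * c)) * algebraMap Rr R (v g) := by
    intro c
    conv_lhs => rw [← Ev c]
    rw [map_sum]
    exact Finset.sum_congr rfl fun g _ => by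
      rw [map_mul (algebraMap Rr R), ← IsScalarTower.algebraMap_apply]
  -- claim2 : the compatibility computation
  have claim2 : ∀ (a : Ix) (b : Ip) (g : Iu),
      drrb (u g * dr (x a * algebraMap Rb R (p b)))
      = dbrb (p b * db (algebraMap Rr R (u g) * x a)) := by
    intro a b g
    rw [← alg_mul_trace dr (u g), hcompat]
    rw [show algebraMap Rr R (u g) * (x a * algebraMap Rb R (p b))
        = algebraMap Rb R (p b) * (algebraMap Rr R (u g) * x a) by ring]
    rw [alg_mul_trace db]
  -- claim3 : collapsing the (p,q) expansion inside R
  have claim3 : ∀ e : Rb,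
      ∑ b, algebraMap Rrb R (dbrb (p b * e)) * algebraMap Rb R (q b)
      = algebraMap Rb R e := by
    intro e
    conv_rhs => rw [← Eq' e]
    rw [map_sum]
    exact Finset.sum_congr rfl fun b _ => by
      rw [map_mul (algebraMap Rb R), ← IsScalarTower.algebraMap_apply]
  -- the key computation for each a : Ix
  have claimb : ∀ a : Ix,
      ∑ b, algebraMap Rr R (dr (x a * algebraMap Rb R (p b)))
          * (algebraMap Rb R (q b) * y a)
      = ∑ g, algebraMap Rb R (db (x a * algebraMap Rr R (u g))) * y a
          * algebraMap Rr R (v g) := by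
    intro a
    calc ∑ b, algebraMap Rr R (dr (x a * algebraMap Rb R (p b)))
            * (algebraMap Rb R (q b) * y a)
        = ∑ b, ∑ g, (algebraMap Rrb R (dbrb (p b * db (algebraMap Rr R (u g) * x a)))
            * algebraMap Rb R (q b)) * (algebraMap Rr R (v g) * y a) := by
          refine Finset.sum_congr rfl fun b _ => ?_
          rw [claim1 (dr (x a * algebraMap Rb R (p b))), Finset.sum_mul]
          refine Finset.sum_congr rfl fun g _ => ?_
          rw [claim2 a b g]; ring
      _ = ∑ g, (∑ b, algebraMap Rrb R (dbrb (p b * db (algebraMap Rr R (u g) * x a)))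
            * algebraMap Rb R (q b)) * (algebraMap Rr R (v g) * y a) := by
          rw [Finset.sum_comm]
          exact Finset.sum_congr rfl fun g _ => (Finset.sum_mul _ _ _).symm
      _ = ∑ g, algebraMap Rb R (db (algebraMap Rr R (u g) * x a))
            * (algebraMap Rr R (v g) * y a) := by
          refine Finset.sum_congr rfl fun g _ => ?_
          rw [claim3]
      _ = ∑ g, algebraMap Rb R (db (x a * algebraMap Rr R (u g))) * y a
            * algebraMap Rr R (v g) := by
          refine Finset.sum_congr rfl fun g _ => ?_
          rw [mul_comm (algebraMap Rr R (u g)) (x a)]; ring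
  -- hW : A * mu_b = ι_r (Σ u v)
  have hW : (∑ b, algebraMap Rr R (dr (algebraMap Rb R (p b))) * algebraMap Rb R (q b))
      * (∑ a, x a * y a) = algebraMap Rr R (∑ g, u g * v g) := by
    calc (∑ b, algebraMap Rr R (dr (algebraMap Rb R (p b))) * algebraMap Rb R (q b))
          * (∑ a, x a * y a)
        = ∑ a, ∑ b, algebraMap Rr R (dr (x a * algebraMap Rb R (p b)))
            * (algebraMap Rb R (q b) * y a) := by
          rw [Finset.sum_mul_sum, Finset.sum_comm]
          refine Finset.sum_congr rfl fun a _ => Finset.sum_congr rfl fun b _ => ?_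
          rw [← hxt a, alg_mul_trace dr (xt a), map_mul]
          ring
      _ = ∑ a, ∑ g, algebraMap Rb R (db (x a * algebraMap Rr R (u g))) * y a
            * algebraMap Rr R (v g) := Finset.sum_congr rfl fun a _ => claimb a
      _ = ∑ g, (∑ a, algebraMap Rb R (db (x a * algebraMap Rr R (u g))) * y a)
            * algebraMap Rr R (v g) := by
          rw [Finset.sum_comm]
          exact Finset.sum_congr rfl fun g _ => (Finset.sum_mul _ _ _).symm
      _ = ∑ g, algebraMap Rr R (u g) * algebraMap Rr R (v g) := by
          refine Finset.sum_congr rfl fun g _ => ?_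
          rw [Ey (algebraMap Rr R (u g))]
      _ = algebraMap Rr R (∑ g, u g * v g) := by
          rw [map_sum]
          exact Finset.sum_congr rfl fun g _ => (map_mul (algebraMap Rr R) _ _).symm
  -- the composite expansion along the r-route
  have Ertv : ∀ f : R, ∑ d, ∑ g,
      algebraMap Rrb R (D (f * (s d * algebraMap Rr R (u g))))
        * (t d * algebraMap Rr R (v g)) = f := by
    intro f
    conv_rhs => rw [← Et f]
    refine Finset.sum_congr rfl fun d _ => ?_
    rw [claim1 (dr (s d * f)), Finset.sum_mul]
    refine Finset.sum_congr rfl fun g _ => ?_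
    rw [hDapp, ← alg_mul_trace dr (u g) (s d * f),
      show algebraMap Rr R (u g) * (s d * f) = f * (s d * algebraMap Rr R (u g)) by ring]
    ring
  -- independence of dual bases: Σ X Y = Σ_{d,g} (s_d ι_r u_g)(t_d ι_r v_g)
  have hB1 : ∑ d, ∑ g, (s d * algebraMap Rr R (u g)) * (t d * algebraMap Rr R (v g))
      = ∑ l, X l * Y l := by
    calc ∑ d, ∑ g, (s d * algebraMap Rr R (u g)) * (t d * algebraMap Rr R (v g))
        = ∑ d, ∑ g, (∑ l, algebraMap Rrb R (D (Y l * (s d * algebraMap Rr R (u g)))) * X l)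
            * (t d * algebraMap Rr R (v g)) := by
          refine Finset.sum_congr rfl fun d _ => Finset.sum_congr rfl fun g _ => ?_
          conv_lhs => rw [← EX (s d * algebraMap Rr R (u g))]
      _ = ∑ l, ∑ d, ∑ g, (algebraMap Rrb R (D (Y l * (s d * algebraMap Rr R (u g)))) * X l)
            * (t d * algebraMap Rr R (v g)) := by
          simp only [Finset.sum_mul]
          exact sum_rotate _
      _ = ∑ l, X l * (∑ d, ∑ g,
            algebraMap Rrb R (D (Y l * (s d * algebraMap Rr R (u g))))
              * (t d * algebraMap Rr R (v g))) := by
          refine Finset.sum_congr rfl fun l _ => ?_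
          rw [Finset.mul_sum]
          refine Finset.sum_congr rfl fun d _ => ?_
          rw [Finset.mul_sum]
          refine Finset.sum_congr rfl fun g _ => ?_
          ring
      _ = ∑ l, X l * Y l := by
          refine Finset.sum_congr rfl fun l _ => ?_
          rw [Ertv (Y l)]
  -- factorization of the double sum
  have hfac : ∑ d, ∑ g, (s d * algebraMap Rr R (u g)) * (t d * algebraMap Rr R (v g))
      = (∑ d, s d * t d) * algebraMap Rr R (∑ g, u g * v g) := by
    rw [map_sum, Finset.sum_mul_sum]
    exact Finset.sum_congr rfl fun d _ => Finset.sum_congr rfl fun g _ => by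
      rw [map_mul (algebraMap Rr R)]; ring
  have h1 : (∑ b, algebraMap Rr R (dr (algebraMap Rb R (p b))) * algebraMap Rb R (q b)) *
      ((∑ d, s d * t d) * (∑ a, x a * y a)) = ∑ l, X l * Y l := by
    linear_combination (∑ d, s d * t d) * hW + hB1 - hfac
  refine ⟨h1, ⟨∑ b, algebraMap Rr R (dr (algebraMap Rb R (p b))) * algebraMap Rb R (q b), ?_⟩⟩
  linear_combination -h1
end

section
/- In a compatible Frobenius square one has ι_r(μ^r_{rb}) · μ_r = ι_b(μ^b_{rb}) · μ_b in R, where μ^r_{rb} = Σ_γ u_γ v_γ ∈ R^r, μ^b_{rb} = Σ_β p_β q_β ∈ R^b, μ_r = Σ_δ s_δ t_δ ∈ R, and μ_b = Σ_α x_α y_α ∈ R; both products equal the mu-element μ_{rb} of R over R^{rb}. -/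
section Aux

variable {A B C : Type*} [CommRing A] [CommRing B] [CommRing C]

/-- Expansion lemma: if `(x, y)` are dual bases for the trace `T`, then any `f`
expands as `∑ a, T (f * y a) • x a`. -/
theorem frob_expansion [Algebra A B] (T : B →ₗ[A] A)
    {I : Type*} [Fintype I] [DecidableEq I] (x y : I → B)
    (hdual : ∀ a b, T (x a * y b) = if a = b then 1 else 0)
    (hx : Submodule.span A (Set.range x) = ⊤) (f : B) :
    (∑ a, T (f * y a) • x a) = f := by
  have hf : f ∈ Submodule.span A (Set.range x) := hx ▸ Submodule.mem_top
  induction hf using Submodule.span_induction with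
  | mem g hg =>
    obtain ⟨b, rfl⟩ := hg
    have : ∀ a, T (x b * y a) • x a = (if b = a then (1:A) else 0) • x a := by
      intro a; rw [hdual]
    simp only [this]
    simp [Finset.sum_ite_eq]
  | zero => simp
  | add g h _ _ ihg ihh =>
    have : ∀ a, T ((g + h) * y a) • x a = T (g * y a) • x a + T (h * y a) • x a := by
      intro a; rw [add_mul, map_add, add_smul]
    simp only [this, Finset.sum_add_distrib, ihg, ihh]
  | smul c g _ ih =>
    have : ∀ a, T ((c • g) * y a) • x a = c • (T (g * y a) • x a) := by
      intro a; rw [smul_mul_assoc, map_smul, smul_assoc]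
    simp only [this, ← Finset.smul_sum, ih]

/-- The mu element `∑ x a * y a` only depends on the trace, not on the
chosen dual bases. -/
theorem frob_mu_indep [Algebra A B] (T : B →ₗ[A] A)
    {I L : Type*} [Fintype I] [DecidableEq I] [Fintype L] [DecidableEq L]
    (x y : I → B) (X Y : L → B)
    (hdual : ∀ a b, T (x a * y b) = if a = b then 1 else 0)
    (hx : Submodule.span A (Set.range x) = ⊤)
    (hXY : ∀ a b, T (X a * Y b) = if a = b then 1 else 0)
    (hY : Submodule.span A (Set.range Y) = ⊤) :
    ∑ a, x a * y a = ∑ l, X l * Y l := by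
  have hYX : ∀ a b, T (Y a * X b) = if a = b then 1 else 0 := by
    intro a b
    rw [mul_comm, hXY]
    simp [eq_comm]
  have expand1 : ∀ l, (∑ a, T (X l * y a) • x a) = X l :=
    fun l => frob_expansion T x y hdual hx (X l)
  have expand2 : ∀ a, (∑ l, T (y a * X l) • Y l) = y a :=
    fun a => frob_expansion T Y X hYX hY (y a)
  calc ∑ a, x a * y a
      = ∑ a, x a * ∑ l, T (y a * X l) • Y l := by
        simp only [expand2]
    _ = ∑ a, ∑ l, T (y a * X l) • (x a * Y l) := by
        simp only [Finset.mul_sum, mul_smul_comm]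
    _ = ∑ l, ∑ a, T (X l * y a) • (x a * Y l) := by
        rw [Finset.sum_comm]
        simp only [mul_comm]
    _ = ∑ l, (∑ a, T (X l * y a) • x a) * Y l := by
        simp only [Finset.sum_mul, smul_mul_assoc]
    _ = ∑ l, X l * Y l := by simp only [expand1]

/-- Spanning sets multiply in a tower. -/
theorem frob_span_prod [Algebra A B] [Algebra B C] [Algebra A C] [IsScalarTower A B C]
    {I J : Type*} (u : I → B) (s : J → C)
    (hu : Submodule.span A (Set.range u) = ⊤)
    (hs : Submodule.span B (Set.range s) = ⊤) :
    Submodule.span A (Set.range fun gd : I × J => algebraMap B C (u gd.1) * s gd.2) = ⊤ := by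
  set S := Set.range fun gd : I × J => algebraMap B C (u gd.1) * s gd.2 with hS
  rw [eq_top_iff]
  rintro f -
  have hf : f ∈ Submodule.span B (Set.range s) := hs ▸ Submodule.mem_top
  have key : ∀ c ∈ Submodule.span B (Set.range s), ∀ b : B, b • c ∈ Submodule.span A S := by
    intro c hc
    induction hc using Submodule.span_induction with
    | mem g hg =>
      obtain ⟨j, rfl⟩ := hg
      intro b
      have hb : b ∈ Submodule.span A (Set.range u) := hu ▸ Submodule.mem_top
      induction hb using Submodule.span_induction with
      | mem w hw =>
        obtain ⟨i, rfl⟩ := hw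
        have : u i • s j = algebraMap B C (u i) * s j := Algebra.smul_def _ _
        rw [this]
        exact Submodule.subset_span ⟨(i, j), rfl⟩
      | zero => simp
      | add w1 w2 _ _ ih1 ih2 => rw [add_smul]; exact Submodule.add_mem _ ih1 ih2
      | smul a w _ ih => rw [smul_assoc]; exact Submodule.smul_mem _ _ ih
    | zero => intro b; simp
    | add c1 c2 _ _ ih1 ih2 =>
      intro b; rw [smul_add]; exact Submodule.add_mem _ (ih1 b) (ih2 b)
    | smul b' c _ ih =>
      intro b; rw [smul_smul]; exact ih (b * b')
  have := key f hf 1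
  simpa using this
end Aux

/-- In a compatible Frobenius square,
iota_r(mu^r_rb) * mu_r = iota_b(mu^b_rb) * mu_b in R, and both equal mu_rb. -/
theorem square_mu_factorization
    (Rrb Rr Rb R : Type*)
    [CommRing Rrb] [CommRing Rr] [CommRing Rb] [CommRing R]
    [Algebra Rrb Rr] [Algebra Rrb Rb] [Algebra Rr R] [Algebra Rb R]
    [Algebra Rrb R] [IsScalarTower Rrb Rr R] [IsScalarTower Rrb Rb R]
    (dr : R →ₗ[Rr] Rr) (db : R →ₗ[Rb] Rb)
    (drrb : Rr →ₗ[Rrb] Rrb) (dbrb : Rb →ₗ[Rrb] Rrb)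
    (Is Ix Iu Ip : Type*) [Fintype Is] [Fintype Ix] [Fintype Iu] [Fintype Ip]
    [DecidableEq Is] [DecidableEq Ix] [DecidableEq Iu] [DecidableEq Ip]
    (s t : Is → R) (x y : Ix → R) (u v : Iu → Rr) (p q : Ip → Rb)
    (hst : ∀ a b, dr (s a * t b) = if a = b then 1 else 0)
    (hs : Submodule.span Rr (Set.range s) = ⊤)
    (ht : Submodule.span Rr (Set.range t) = ⊤)
    (hxy : ∀ a b, db (x a * y b) = if a = b then 1 else 0)
    (hx : Submodule.span Rb (Set.range x) = ⊤)
    (hy : Submodule.span Rb (Set.range y) = ⊤)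
    (huv : ∀ a b, drrb (u a * v b) = if a = b then 1 else 0)
    (hu : Submodule.span Rrb (Set.range u) = ⊤)
    (hv : Submodule.span Rrb (Set.range v) = ⊤)
    (hpq : ∀ a b, dbrb (p a * q b) = if a = b then 1 else 0)
    (hp : Submodule.span Rrb (Set.range p) = ⊤)
    (hq : Submodule.span Rrb (Set.range q) = ⊤)
    (hcompat : ∀ f : R, drrb (dr f) = dbrb (db f))
    (L : Type*) [Fintype L] [DecidableEq L]
    (X Y : L → R)
    (hXY : ∀ a b, drrb (dr (X a * Y b)) = if a = b then 1 else 0)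
    (hX : Submodule.span Rrb (Set.range X) = ⊤)
    (hY : Submodule.span Rrb (Set.range Y) = ⊤) :
    algebraMap Rr R (∑ g, u g * v g) * (∑ d, s d * t d) = ∑ l, X l * Y l ∧
      algebraMap Rb R (∑ b, p b * q b) * (∑ a, x a * y a) = ∑ l, X l * Y l := by
  -- The common trace R → Rrb
  set T : R →ₗ[Rrb] Rrb := drrb.comp (dr.restrictScalars Rrb) with hT
  have hTdef : ∀ f : R, T f = drrb (dr f) := fun f => rfl
  -- linearity facts for dr and db over their base rings, read via algebraMap
  have hdr_mul : ∀ (c : Rr) (f : R), dr (algebraMap Rr R c * f) = c * dr f := by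
    intro c f
    rw [← Algebra.smul_def, map_smul, smul_eq_mul]
  have hdb_mul : ∀ (c : Rb) (f : R), db (algebraMap Rb R c * f) = c * db f := by
    intro c f
    rw [← Algebra.smul_def, map_smul, smul_eq_mul]
  constructor
  · -- red side
    set xf : Iu × Is → R := fun gd => algebraMap Rr R (u gd.1) * s gd.2 with hxf
    set yf : Iu × Is → R := fun gd => algebraMap Rr R (v gd.1) * t gd.2 with hyf
    have hdual : ∀ a b : Iu × Is, T (xf a * yf b) = if a = b then 1 else 0 := by
      rintro ⟨g, d⟩ ⟨g', d'⟩
      have h1 : xf (g, d) * yf (g', d')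
          = algebraMap Rr R (u g * v g') * (s d * t d') := by
        simp only [hxf, hyf, map_mul]
        ring
      rw [hTdef, h1, hdr_mul, hst]
      by_cases hd : d = d'
      · subst hd
        simp only [if_pos rfl, mul_one]
        by_cases hg : g = g' <;> simp [hg, Prod.ext_iff, huv]
      · simp [hd, Prod.ext_iff]
    have hspan : Submodule.span Rrb (Set.range xf) = ⊤ :=
      frob_span_prod u s hu hs
    have hmain := frob_mu_indep T xf yf X Y hdual hspan hXY hY
    rw [← hmain]
    rw [Fintype.sum_prod_type, map_sum, Finset.sum_mul]
    refine Finset.sum_congr rfl fun g _ => ?_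
    rw [map_mul, Finset.mul_sum]
    refine Finset.sum_congr rfl fun d _ => ?_
    simp only [hxf, hyf]
    ring
  · -- blue side
    set xf : Ip × Ix → R := fun gd => algebraMap Rb R (p gd.1) * x gd.2 with hxf
    set yf : Ip × Ix → R := fun gd => algebraMap Rb R (q gd.1) * y gd.2 with hyf
    have hdual : ∀ a b : Ip × Ix, T (xf a * yf b) = if a = b then 1 else 0 := by
      rintro ⟨g, d⟩ ⟨g', d'⟩
      have h1 : xf (g, d) * yf (g', d')
          = algebraMap Rb R (p g * q g') * (x d * y d') := by
        simp only [hxf, hyf, map_mul]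
        ring
      rw [hTdef, hcompat, h1, hdb_mul, hxy]
      by_cases hd : d = d'
      · subst hd
        simp only [if_pos rfl, mul_one]
        by_cases hg : g = g' <;> simp [hg, Prod.ext_iff, hpq]
      · simp [hd, Prod.ext_iff]
    have hspan : Submodule.span Rrb (Set.range xf) = ⊤ :=
      frob_span_prod p x hp hx
    have hmain := frob_mu_indep T xf yf X Y hdual hspan hXY hY
    rw [← hmain]
    rw [Fintype.sum_prod_type, map_sum, Finset.sum_mul]
    refine Finset.sum_congr rfl fun g _ => ?_
    rw [map_mul, Finset.mul_sum]
    refine Finset.sum_congr rfl fun d _ => ?_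
    simp only [hxf, hyf]
    ring
end
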